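/- arXiv:1909.08995 — 5 statements merged into one kernel-verified Lean document; each statement's English description precedes it below -/
import Mathlib

section
/- Let Ω₁,…,Ωₙ (n≥2) be subsets of a normed vector space X and x̄ ∈ ∩_{i=1}^n Ωᵢ. Then the collection {Ω₁,…,Ωₙ} is stationary at x̄ if and only if for every ε>0 there exist a number ρ ∈ (0,ε) and vectors a₁,…,a_{n−1} ∈ X with max_{1≤i≤n−1}‖aᵢ‖ < ερ and ∩_{i=1}^{n−1}(Ωᵢ−aᵢ) ∩ Ωₙ ∩ B_ρ(x̄) = ∅. -/
/-!
Translating the last set by `0` turns the asymmetric condition into stationarity. Conversely,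
replacing every `aᵢ` by `aᵢ - aₙ` moves `⋂ (Ωᵢ - aᵢ)` by `aₙ`, so it still misses the ball of
radius `ρ - ‖aₙ‖ > (1 - δ) ρ` around `x̄`; for `δ` small the new vectors, of norm `< 2 δ ρ`, are
still `ε`-small relative to that radius.
-/

open Metric

lemma Real.iSup_lt_iff_of_finite {ι : Type*} [Finite ι] {f : ι → ℝ} {c : ℝ} (hc : 0 < c) :
    (⨆ i, f i) < c ↔ ∀ i, f i < c := by
  rcases isEmpty_or_nonempty ι with hι | hι
  · simp [hc]
  · refine ⟨fun h i => (le_ciSup (Finite.bddAbove_range f) i).trans_lt h, fun h => ?_⟩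
    obtain ⟨i, hi⟩ := exists_eq_ciSup_of_finite (f := f)
    exact hi ▸ h i

section Translates

variable {X : Type*} [SeminormedAddCommGroup X]

lemma iInter_image_sub_snoc_zero {m : ℕ} (Ω : Fin (m + 1) → Set X) (a : Fin m → X) :
    ⋂ i, (fun z => z - (Fin.snoc a 0 : Fin (m + 1) → X) i) '' Ω i =
      (⋂ i : Fin m, (fun z => z - a i) '' Ω i.castSucc) ∩ Ω (Fin.last m) := by
  ext z
  simp [Fin.forall_fin_succ']

lemma iInter_image_sub_sub_inter_ball_eq_empty {ι : Type*} {Ω : ι → Set X} {a : ι → X}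
    {c x : X} {r ρ : ℝ} (h : (⋂ i, (fun z => z - a i) '' Ω i) ∩ ball x ρ = ∅)
    (hr : r + ‖c‖ ≤ ρ) :
    (⋂ i, (fun z => z - (a i - c)) '' Ω i) ∩ ball x r = ∅ := by
  rw [Set.eq_empty_iff_forall_notMem] at h ⊢
  rintro z ⟨hz, hzx⟩
  refine h (z - c) ⟨?_, ?_⟩
  · simp only [Set.mem_iInter, Set.mem_image] at hz ⊢
    intro i
    obtain ⟨w, hw, rfl⟩ := hz i
    exact ⟨w, hw, by abel⟩
  · rw [mem_ball] at hzx ⊢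
    calc dist (z - c) x ≤ dist (z - c) z + dist z x := dist_triangle _ _ _
      _ < ‖c‖ + r := by rw [dist_self_sub_left]; gcongr
      _ ≤ ρ := by linarith

def IsStationaryAt {ι : Type*} (Ω : ι → Set X) (x : X) : Prop :=
  ∀ ε > (0 : ℝ), ∃ ρ : ℝ, 0 < ρ ∧ ρ < ε ∧ ∃ a : ι → X,
    (⨆ i, ‖a i‖) < ε * ρ ∧ (⋂ i, (fun z => z - a i) '' Ω i) ∩ ball x ρ = ∅

variable {m : ℕ} {Ω : Fin (m + 1) → Set X} {x : X}

lemma IsStationaryAt.exists_translates_fixing_last (h : IsStationaryAt Ω x) {ε : ℝ}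
    (hε : 0 < ε) :
    ∃ ρ : ℝ, 0 < ρ ∧ ρ < ε ∧ ∃ a : Fin m → X, (⨆ i, ‖a i‖) < ε * ρ ∧
      (⋂ i : Fin m, (fun z => z - a i) '' Ω i.castSucc) ∩ Ω (Fin.last m) ∩ ball x ρ = ∅ := by
  set δ := min (ε / 4) (1 / 2)
  have hδ : δ ≤ ε / 4 := min_le_left _ _
  have hδ' : δ ≤ 1 / 2 := min_le_right _ _
  obtain ⟨ρ, hρ, hρδ, a, ha, hempty⟩ := h δ (by positivity)
  rw [Real.iSup_lt_iff_of_finite (by positivity)] at ha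
  have hρ' : 0 < ρ * (1 - δ) := mul_pos hρ (by linarith)
  refine ⟨ρ * (1 - δ), hρ', by nlinarith, fun i => a i.castSucc - a (Fin.last m), ?_, ?_⟩
  · rw [Real.iSup_lt_iff_of_finite (by positivity)]
    intro i
    calc ‖a i.castSucc - a (Fin.last m)‖ ≤ ‖a i.castSucc‖ + ‖a (Fin.last m)‖ := norm_sub_le _ _
      _ < δ * ρ + δ * ρ := add_lt_add (ha _) (ha _)
      _ ≤ ε * (ρ * (1 - δ)) := by
        nlinarith [mul_le_mul_of_nonneg_right hδ hρ.le,
          mul_le_mul_of_nonneg_left hδ' (mul_pos hε hρ).le]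
  · have hsnoc : (Fin.snoc (fun i => a i.castSucc - a (Fin.last m)) 0 : Fin (m + 1) → X) =
        fun i => a i - a (Fin.last m) := by
      ext i
      induction i using Fin.lastCases <;> simp
    rw [← iInter_image_sub_snoc_zero, hsnoc]
    exact iInter_image_sub_sub_inter_ball_eq_empty hempty (by nlinarith [ha (Fin.last m)])

lemma isStationaryAt_of_translates_fixing_last
    (h : ∀ ε > (0 : ℝ), ∃ ρ : ℝ, 0 < ρ ∧ ρ < ε ∧ ∃ a : Fin m → X, (⨆ i, ‖a i‖) < ε * ρ ∧
      (⋂ i : Fin m, (fun z => z - a i) '' Ω i.castSucc) ∩ Ω (Fin.last m) ∩ ball x ρ = ∅) :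
    IsStationaryAt Ω x := by
  intro ε hε
  obtain ⟨ρ, hρ, hρε, a, ha, hempty⟩ := h ε hε
  refine ⟨ρ, hρ, hρε, Fin.snoc a 0, ?_, by rwa [iInter_image_sub_snoc_zero]⟩
  rw [Real.iSup_lt_iff_of_finite (by positivity)] at ha ⊢
  simpa [Fin.forall_fin_succ', hε, hρ] using ha

end Translates

theorem stmt2_general {X : Type*} [NormedAddCommGroup X] {m : ℕ}
    (Ω : Fin (m + 1) → Set X) (xbar : X) :
    (∀ ε > (0 : ℝ), ∃ ρ : ℝ, 0 < ρ ∧ ρ < ε ∧ ∃ a : Fin (m + 1) → X,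
        (⨆ i, ‖a i‖) < ε * ρ ∧
        (⋂ i, (fun z => z - a i) '' Ω i) ∩ Metric.ball xbar ρ = ∅) ↔
    (∀ ε > (0 : ℝ), ∃ ρ : ℝ, 0 < ρ ∧ ρ < ε ∧ ∃ a : Fin m → X,
        (⨆ i, ‖a i‖) < ε * ρ ∧
        ((⋂ i : Fin m, (fun z => z - a i) '' Ω i.castSucc) ∩ Ω (Fin.last m)) ∩
          Metric.ball xbar ρ = ∅) :=
  ⟨fun h _ hε => IsStationaryAt.exists_translates_fixing_last h hε,
    isStationaryAt_of_translates_fixing_last⟩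

/-- stationarity of a collection of `m+1 = n ≥ 2` sets at `xbar` is
equivalent to its asymmetric version where only the first `n-1` sets are translated. -/
theorem stmt2 {X : Type*} [NormedAddCommGroup X] [NormedSpace ℝ X] {m : ℕ} (hm : 1 ≤ m)
    (Ω : Fin (m + 1) → Set X) (xbar : X) (hxbar : ∀ i, xbar ∈ Ω i) :
    (∀ ε > (0 : ℝ), ∃ ρ : ℝ, 0 < ρ ∧ ρ < ε ∧ ∃ a : Fin (m + 1) → X,
        (⨆ i, ‖a i‖) < ε * ρ ∧
        (⋂ i, (fun z => z - a i) '' Ω i) ∩ Metric.ball xbar ρ = ∅) ↔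
    (∀ ε > (0 : ℝ), ∃ ρ : ℝ, 0 < ρ ∧ ρ < ε ∧ ∃ a : Fin m → X,
        (⨆ i, ‖a i‖) < ε * ρ ∧
        ((⋂ i : Fin m, (fun z => z - a i) '' Ω i.castSucc) ∩ Ω (Fin.last m)) ∩
          Metric.ball xbar ρ = ∅) :=
  stmt2_general Ω xbar
end

section
/- Let Ω₁,…,Ωₙ (n≥2) be subsets of a normed vector space X and x̄ ∈ ∩_{i=1}^n Ωᵢ. Then the collection {Ω₁,…,Ωₙ} is approximately stationary at x̄ if and only if for every ε>0 there exist a number ρ ∈ (0,ε), points ωᵢ ∈ Ωᵢ ∩ B_ε(x̄) (i=1,…,n) and vectors a₁,…,a_{n−1} ∈ X with max_{1≤i≤n−1}‖aᵢ‖ < ερ and ∩_{i=1}^{n−1}(Ωᵢ−ωᵢ−aᵢ) ∩ (Ωₙ−ωₙ) ∩ (ρ𝔹) = ∅, where 𝔹 is the open unit ball of X. -/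
/-!
Translating every set of the collection by the same vector `c` shifts the intersection
`⋂ᵢ (Ωᵢ - ωᵢ - aᵢ)` by `c`, so one may always arrange `aₙ = 0`: replace `aᵢ` by `aᵢ - aₙ`
and shrink the radius from `ρ` to `ρ - ‖aₙ‖`. Running the definition with `min (ε/4) (1/2)` in
place of `ε` absorbs the resulting loss: the new perturbations have norm below `2 (ε/4) ρ`, and the
new radius is above `ρ / 2`.
-/

open Metric Set

lemma iSup_norm_lt_iff {ι E : Type*} [Finite ι] [SeminormedAddCommGroup E] {a : ι → E} {r : ℝ} :
    (⨆ i, ‖a i‖) < r ↔ 0 < r ∧ ∀ i, ‖a i‖ < r := by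
  have hbdd : BddAbove (range fun i => ‖a i‖) := (finite_range _).bddAbove
  refine ⟨fun h => ⟨(Real.iSup_nonneg fun i => norm_nonneg (a i)).trans_lt h,
    fun i => (le_ciSup hbdd i).trans_lt h⟩, fun ⟨hr, ha⟩ => ?_⟩
  cases isEmpty_or_nonempty ι
  · simpa using hr
  · obtain ⟨i, hi⟩ := exists_eq_ciSup_of_finite (f := fun i => ‖a i‖)
    exact hi ▸ ha i

lemma iInter_image_sub_sub_sub_const {ι X : Type*} [AddCommGroup X] (Ω : ι → Set X)
    (ω a : ι → X) (c : X) :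
    ⋂ i, (fun z => z - ω i - (a i - c)) '' Ω i =
      (· - c) ⁻¹' ⋂ i, (fun z => z - ω i - a i) '' Ω i := by
  ext z
  simp only [mem_iInter, mem_preimage, mem_image]
  refine forall_congr' fun i => exists_congr fun x => and_congr_right fun _ => ?_
  rw [eq_sub_iff_add_eq]
  abel_nf

lemma iInter_image_sub_sub_snoc_zero {X : Type*} [AddGroup X] {m : ℕ}
    (Ω : Fin (m + 1) → Set X) (ω : Fin (m + 1) → X) (a : Fin m → X) :
    ⋂ i, (fun z => z - ω i - (Fin.snoc a 0 : Fin (m + 1) → X) i) '' Ω i =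
      (⋂ i : Fin m, (fun z => z - ω i.castSucc - a i) '' Ω i.castSucc) ∩
        (fun z => z - ω (Fin.last m)) '' Ω (Fin.last m) := by
  ext z
  simp only [mem_iInter, mem_inter_iff, Fin.forall_fin_succ', Fin.snoc_castSucc, Fin.snoc_last,
    sub_zero]

lemma disjoint_preimage_sub_ball {X : Type*} [SeminormedAddCommGroup X] {S : Set X} {ρ : ℝ}
    (h : Disjoint S (ball 0 ρ)) (c : X) : Disjoint ((· - c) ⁻¹' S) (ball 0 (ρ - ‖c‖)) := by
  refine (h.preimage (· - c)).mono_right fun z hz => ?_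
  simp only [mem_preimage, mem_ball, dist_zero_right] at hz ⊢
  linarith [norm_sub_le z c]

theorem stmt3_general {X : Type*} [NormedAddCommGroup X] {m : ℕ}
    (Ω : Fin (m + 1) → Set X) (xbar : X) :
    (∀ ε > (0 : ℝ), ∃ ρ : ℝ, 0 < ρ ∧ ρ < ε ∧ ∃ ω : Fin (m + 1) → X,
        (∀ i, ω i ∈ Ω i ∩ Metric.ball xbar ε) ∧ ∃ a : Fin (m + 1) → X,
        (⨆ i, ‖a i‖) < ε * ρ ∧
        (⋂ i, (fun z => z - ω i - a i) '' Ω i) ∩ Metric.ball (0 : X) ρ = ∅) ↔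
    (∀ ε > (0 : ℝ), ∃ ρ : ℝ, 0 < ρ ∧ ρ < ε ∧ ∃ ω : Fin (m + 1) → X,
        (∀ i, ω i ∈ Ω i ∩ Metric.ball xbar ε) ∧ ∃ a : Fin m → X,
        (⨆ i, ‖a i‖) < ε * ρ ∧
        ((⋂ i : Fin m, (fun z => z - ω i.castSucc - a i) '' Ω i.castSucc) ∩
            ((fun z => z - ω (Fin.last m)) '' Ω (Fin.last m))) ∩
          Metric.ball (0 : X) ρ = ∅) := by
  simp only [← disjoint_iff_inter_eq_empty]
  refine ⟨fun h ε hε => ?_, fun h ε hε => ?_⟩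
  · set ε' := min (ε / 4) (1 / 2)
    have hε' : 0 < ε' := by positivity
    obtain ⟨ρ, hρ, hρε', ω, hω, a, hsup, hdisj⟩ := h ε' hε'
    obtain ⟨-, ha⟩ := iSup_norm_lt_iff.1 hsup
    set c := a (Fin.last m)
    have hc : ‖c‖ < ε' * ρ := ha _
    have hε'ε : ε' ≤ ε / 4 := min_le_left _ _
    have hε'1 : ε' ≤ 1 / 2 := min_le_right _ _
    have hρc : ρ / 2 < ρ - ‖c‖ := by nlinarith
    refine ⟨ρ - ‖c‖, by linarith, by linarith [norm_nonneg c], ω,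
      fun i => ⟨(hω i).1, ball_subset_ball (by linarith) (hω i).2⟩,
      Fin.init fun i => a i - c, iSup_norm_lt_iff.2 ⟨mul_pos hε (by linarith), fun j => ?_⟩, ?_⟩
    · calc ‖a j.castSucc - c‖ ≤ ‖a j.castSucc‖ + ‖c‖ := norm_sub_le _ _
        _ < ε' * ρ + ε' * ρ := add_lt_add (ha _) hc
        _ ≤ ε * (ρ - ‖c‖) := by nlinarith
    · have hsnoc : (Fin.snoc (Fin.init fun i => a i - c) 0 : Fin (m + 1) → X) = fun i => a i - c :=
        by simpa only [c, sub_self] using Fin.snoc_init_self fun i => a i - c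
      rw [← iInter_image_sub_sub_snoc_zero, hsnoc, iInter_image_sub_sub_sub_const]
      exact disjoint_preimage_sub_ball hdisj c
  · obtain ⟨ρ, hρ, hρε, ω, hω, a, hsup, hdisj⟩ := h ε hε
    obtain ⟨hερ, ha⟩ := iSup_norm_lt_iff.1 hsup
    refine ⟨ρ, hρ, hρε, ω, hω, Fin.snoc a 0, iSup_norm_lt_iff.2 ⟨hερ, Fin.lastCases ?_ fun j => ?_⟩,
      by rwa [iInter_image_sub_sub_snoc_zero]⟩
    · simpa only [Fin.snoc_last, norm_zero] using hερ
    · simpa only [Fin.snoc_castSucc] using ha j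

/-- approximate stationarity of a collection of `m+1 = n ≥ 2` sets at `xbar`
is equivalent to its asymmetric version where only the first `n-1` (shifted) sets are
translated. -/
theorem stmt3 {X : Type*} [NormedAddCommGroup X] [NormedSpace ℝ X] {m : ℕ} (hm : 1 ≤ m)
    (Ω : Fin (m + 1) → Set X) (xbar : X) (hxbar : ∀ i, xbar ∈ Ω i) :
    (∀ ε > (0 : ℝ), ∃ ρ : ℝ, 0 < ρ ∧ ρ < ε ∧ ∃ ω : Fin (m + 1) → X,
        (∀ i, ω i ∈ Ω i ∩ Metric.ball xbar ε) ∧ ∃ a : Fin (m + 1) → X,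
        (⨆ i, ‖a i‖) < ε * ρ ∧
        (⋂ i, (fun z => z - ω i - a i) '' Ω i) ∩ Metric.ball (0 : X) ρ = ∅) ↔
    (∀ ε > (0 : ℝ), ∃ ρ : ℝ, 0 < ρ ∧ ρ < ε ∧ ∃ ω : Fin (m + 1) → X,
        (∀ i, ω i ∈ Ω i ∩ Metric.ball xbar ε) ∧ ∃ a : Fin m → X,
        (⨆ i, ‖a i‖) < ε * ρ ∧
        ((⋂ i : Fin m, (fun z => z - ω i.castSucc - a i) '' Ω i.castSucc) ∩
            ((fun z => z - ω (Fin.last m)) '' Ω (Fin.last m))) ∩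
          Metric.ball (0 : X) ρ = ∅) :=
  stmt3_general Ω xbar
end

section
/- Let X be a metric space, ψ: X → ℝ∪{+∞}, φ: ℝ → ℝ∪{+∞}, x ∈ dom ψ with ψ(x) ∈ dom φ. Suppose φ is nondecreasing on ℝ and differentiable at ψ(x), and either φ'(ψ(x)) > 0 or |∇ψ|(x) < +∞. Then |∇(φ∘ψ)|(x) = φ'(ψ(x))·|∇ψ|(x). -/
open Filter
open scoped Topology ENNReal

/-- The (local) slope of an extended-real-valued function `ψ : X → ℝ ∪ {+∞}` at `x`:
`|∇ψ|(x) = limsup_{u→x, u≠x} [ψ(x)−ψ(u)]₊ / d(x,u)`, with value `+∞` if `ψ x = +∞`. -/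
noncomputable def slopeE {X : Type*} [MetricSpace X] (ψ : X → EReal) (x : X) : ℝ≥0∞ :=
  if ψ x = ⊤ then ⊤
  else Filter.limsup (fun u => ENNReal.ofReal ((ψ x - ψ u).toReal / dist x u)) (𝓝[≠] x)

/-!
Put `a = ψ x`, `t u = min (ψ u) (ψ x)` and `h = toReal ∘ φ`. Only points where `ψ` drops below
`ψ x` contribute to either slope, and there `(φ∘ψ)(x) - (φ∘ψ)(u) = h a - h (t u)`; so the
difference quotient of `φ∘ψ` is that of `ψ` times the slope of `h` between `t u` and `a`.
If `|∇ψ|(x) < ∞`, the quotients `(a - t u) / d(x,u)` stay bounded, hence `t u → a`, the slope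
factor tends to `φ'(a)` and the two limsups multiply. If `|∇ψ|(x) = ∞` and `φ'(a) > 0`,
monotonicity gives `h a - h s ≥ min (φ'(a)/2 · (a - s), m)` for some `m > 0`, and
`m / d(x,u) → ∞`, so `|∇(φ∘ψ)|(x) = ∞` as well.
-/

open Set

namespace ENNReal

variable {ι : Type*} {f : Filter ι}

theorem limsup_mul_of_tendsto {u v : ι → ℝ≥0∞} {b : ℝ≥0∞} (hv : Tendsto v f (𝓝 b))
    (hb : b ≠ ∞) (hub : limsup u f ≠ ∞ ∨ b ≠ 0) : limsup (u * v) f = limsup u f * b := by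
  rcases f.eq_or_neBot with rfl | _
  · simp
  refine le_antisymm ?_ ?_
  · rw [← hv.limsup_eq] at hb hub ⊢
    exact limsup_mul_le' (Or.inr hb) hub
  · rw [← hv.liminf_eq]
    exact le_limsup_mul

theorem limsup_min_eq_top {u v : ι → ℝ≥0∞} (hu : limsup u f = ∞) (hv : Tendsto v f (𝓝 ∞)) :
    limsup (fun i => min (u i) (v i)) f = ∞ := by
  refine eq_top_of_forall_nnreal_le fun r => le_limsup_of_frequently_le ?_
  have hu' : ∃ᶠ i in f, (r : ℝ≥0∞) < u i := frequently_lt_of_lt_limsup (by isBoundedDefault)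
    (hu ▸ coe_lt_top)
  have hv' : ∀ᶠ i in f, (r : ℝ≥0∞) < v i := hv.eventually (lt_mem_nhds coe_lt_top)
  exact (hu'.and_eventually hv').mono fun i hi => le_min hi.1.le hi.2.le

end ENNReal

section DifferenceQuotient

variable {α : Type*} {l : Filter α} {d t : α → ℝ} {h : ℝ → ℝ} {a c : ℝ}

/-- Setting the slope at `a` to `c` makes the last factor continuous at `a`; at `s = a` the
middle factor vanishes anyway. -/
theorem ofReal_sub_div_eq_mul_update_slope {s r : ℝ} (hs : s ≤ a) (hr : 0 ≤ r) :
    ENNReal.ofReal ((h a - h s) / r) =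
      ENNReal.ofReal ((a - s) / r) * ENNReal.ofReal (Function.update (slope h a) a c s) := by
  rcases hs.lt_or_eq with hs | rfl
  · rw [Function.update_of_ne hs.ne, ← ENNReal.ofReal_mul (div_nonneg (sub_nonneg.2 hs.le) hr),
      slope_def_field]
    congr 1
    field_simp [(sub_pos.2 hs).ne', (sub_neg.2 hs).ne]
    ring
  · simp

theorem tendsto_nhdsLE_of_limsup_ofReal_sub_div_ne_top (hd : Tendsto d l (𝓝[>] 0))
    (ht : ∀ u, t u ≤ a) (hL : limsup (fun u => ENNReal.ofReal ((a - t u) / d u)) l ≠ ∞) :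
    Tendsto t l (𝓝[≤] a) := by
  obtain ⟨M, hLM, -⟩ := ENNReal.lt_iff_exists_nnreal_btwn.1 hL.lt_top
  have hclose : ∀ᶠ u in l, a - M * d u ≤ t u := by
    filter_upwards [eventually_lt_of_limsup_lt hLM, hd.eventually self_mem_nhdsWithin]
      with u hu hdu
    rw [← ENNReal.ofReal_coe_nnreal, ENNReal.ofReal_lt_ofReal_iff'] at hu
    have := (div_lt_iff₀ hdu).1 hu.1
    linarith
  have hlow : Tendsto (fun u => a - M * d u) l (𝓝 a) := by
    simpa using tendsto_const_nhds.sub ((tendsto_nhdsWithin_iff.1 hd).1.const_mul (M : ℝ))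
  exact tendsto_nhdsWithin_iff.2 ⟨tendsto_of_tendsto_of_tendsto_of_le_of_le' hlow
    tendsto_const_nhds hclose (Eventually.of_forall ht), Eventually.of_forall ht⟩

theorem exists_min_le_sub_of_hasDerivWithinAt (hmono : MonotoneOn h (Iic a))
    (hderiv : HasDerivWithinAt h c (Iic a) a) (hc : 0 < c) :
    ∃ m > 0, ∀ s ≤ a, min (c / 2 * (a - s)) m ≤ h a - h s := by
  have hslope : Tendsto (slope h a) (𝓝[<] a) (𝓝 c) := by
    simpa [Iic_sdiff_right] using hasDerivWithinAt_iff_tendsto_slope.1 hderiv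
  obtain ⟨b, hba : b < a, hb⟩ := mem_nhdsLT_iff_exists_Ioo_subset.1
    (hslope.eventually (lt_mem_nhds (half_lt_self hc)))
  have key : ∀ s ∈ Ioo b a, c / 2 * (a - s) < h a - h s := fun s hs => by
    have := hb hs
    rw [mem_ofPred_eq, slope_def_field, lt_div_iff_of_neg (sub_neg.2 hs.2)] at this
    linarith
  obtain ⟨b', hb'⟩ := nonempty_Ioo.2 hba
  refine ⟨h a - h b', (mul_pos (half_pos hc) (sub_pos.2 hb'.2)).trans (key b' hb'), fun s hs => ?_⟩
  rcases le_or_gt s b' with hsb | hsb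
  · exact min_le_of_right_le (by linarith [hmono (hsb.trans hb'.2.le) hb'.2.le hsb])
  · rcases hs.lt_or_eq with hs | rfl
    · exact min_le_of_left_le (key s ⟨hb'.1.trans hsb, hs⟩).le
    · exact min_le_of_left_le (by simp)

theorem limsup_ofReal_sub_comp_div_eq_top (hd : Tendsto d l (𝓝[>] 0)) (ht : ∀ u, t u ≤ a)
    (hmono : MonotoneOn h (Iic a)) (hderiv : HasDerivWithinAt h c (Iic a) a) (hc : 0 < c)
    (hL : limsup (fun u => ENNReal.ofReal ((a - t u) / d u)) l = ∞) :
    limsup (fun u => ENNReal.ofReal ((h a - h (t u)) / d u)) l = ∞ := by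
  obtain ⟨m, hm, hmin⟩ := exists_min_le_sub_of_hasDerivWithinAt hmono hderiv hc
  have hnear :
      limsup (fun u => ENNReal.ofReal (c / 2) * ENNReal.ofReal ((a - t u) / d u)) l = ∞ := by
    rw [ENNReal.limsup_const_mul_of_ne_top ENNReal.ofReal_ne_top, hL,
      ENNReal.mul_top (ENNReal.ofReal_pos.2 (half_pos hc)).ne']
  have hfar : Tendsto (fun u => ENNReal.ofReal (m / d u)) l (𝓝 ∞) := by
    simp only [div_eq_mul_inv]
    exact ENNReal.tendsto_ofReal_atTop.comp
      ((tendsto_inv_nhdsGT_zero.comp hd).const_mul_atTop hm)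
  refine top_unique ((ENNReal.limsup_min_eq_top hnear hfar).symm.trans_le
    (limsup_le_limsup ?_))
  filter_upwards [hd.eventually self_mem_nhdsWithin] with u (hu : 0 < d u)
  rw [← ENNReal.ofReal_mul (half_pos hc).le, ← ENNReal.ofReal_min, mul_div_assoc',
    min_div_div_right hu.le]
  exact ENNReal.ofReal_le_ofReal (div_le_div_of_nonneg_right (hmin _ (ht u)) hu.le)

theorem limsup_ofReal_sub_comp_div_eq (hd : Tendsto d l (𝓝[>] 0)) (ht : ∀ u, t u ≤ a)
    (hmono : MonotoneOn h (Iic a)) (hderiv : HasDerivWithinAt h c (Iic a) a)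
    (hcond : 0 < c ∨ limsup (fun u => ENNReal.ofReal ((a - t u) / d u)) l ≠ ∞) :
    limsup (fun u => ENNReal.ofReal ((h a - h (t u)) / d u)) l =
      ENNReal.ofReal c * limsup (fun u => ENNReal.ofReal ((a - t u) / d u)) l := by
  by_cases hL : limsup (fun u => ENNReal.ofReal ((a - t u) / d u)) l = ∞
  · have hc : 0 < c := hcond.resolve_right (not_not.2 hL)
    rw [hL, ENNReal.mul_top (ENNReal.ofReal_pos.2 hc).ne',
      limsup_ofReal_sub_comp_div_eq_top hd ht hmono hderiv hc hL]
  have hslope : Tendsto (fun u => ENNReal.ofReal (Function.update (slope h a) a c (t u))) l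
      (𝓝 (ENNReal.ofReal c)) := by
    have hcont := continuousWithinAt_update_same.2 (hasDerivWithinAt_iff_tendsto_slope.1 hderiv)
    rw [ContinuousWithinAt, Function.update_self] at hcont
    exact (ENNReal.continuous_ofReal.tendsto c).comp
      (hcont.comp (tendsto_nhdsLE_of_limsup_ofReal_sub_div_ne_top hd ht hL))
  rw [mul_comm, ← ENNReal.limsup_mul_of_tendsto hslope ENNReal.ofReal_ne_top (Or.inl hL)]
  refine limsup_congr ?_
  filter_upwards [hd.eventually self_mem_nhdsWithin] with u (hu : 0 < d u)
  exact ofReal_sub_div_eq_mul_update_slope (ht u) hu.le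

end DifferenceQuotient

theorem ofReal_toReal_sub_div_eq_min {p q : EReal} (hp : p ≠ ⊤) (hp' : p ≠ ⊥) (hq : q ≠ ⊥)
    {r : ℝ} (hr : 0 ≤ r) :
    ENNReal.ofReal ((p - q).toReal / r) = ENNReal.ofReal ((p.toReal - (min q p).toReal) / r) := by
  rcases le_total q p with hqp | hpq
  · rw [min_eq_left hqp, EReal.toReal_sub hp hp' (ne_top_of_le_ne_top hp hqp) hq]
  · rw [min_eq_right hpq, sub_self, zero_div, ENNReal.ofReal_zero, ENNReal.ofReal_eq_zero]
    exact div_nonpos_of_nonpos_of_nonneg (EReal.toReal_nonpos (EReal.sub_nonpos.2 hpq)) hr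

theorem slopeE_eq_limsup_min {X : Type*} [MetricSpace X] {f : X → EReal} {x : X}
    (hf : ∀ u, f u ≠ ⊥) (hfx : f x ≠ ⊤) :
    slopeE f x = limsup (fun u => ENNReal.ofReal
      (((f x).toReal - (min (f u) (f x)).toReal) / dist x u)) (𝓝[≠] x) := by
  simp only [slopeE, if_neg hfx,
    ofReal_toReal_sub_div_eq_min hfx (hf x) (hf _) dist_nonneg]

theorem tendsto_dist_nhdsNE {X : Type*} [MetricSpace X] (x : X) :
    Tendsto (dist x) (𝓝[≠] x) (𝓝[>] 0) :=
  tendsto_nhdsWithin_iff.2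
    ⟨((continuous_const.dist continuous_id).tendsto' x 0 (dist_self x)).mono_left
      nhdsWithin_le_nhds, eventually_nhdsWithin_of_forall fun _ hu => dist_pos.2 (Ne.symm hu)⟩

theorem Monotone.monotoneOn_toReal_Iic {φ : ℝ → EReal} (hφ : Monotone φ) (hbot : ∀ t, φ t ≠ ⊥)
    {a : ℝ} (ha : φ a ≠ ⊤) : MonotoneOn (fun t => (φ t).toReal) (Iic a) :=
  fun _ _ _ ht hst => EReal.toReal_le_toReal (hφ hst) (hbot _) (ne_top_of_le_ne_top ha (hφ ht))

theorem Monotone.min_ite_top_eq {φ : ℝ → EReal} (hφ : Monotone φ) {p q : EReal} (hp : p ≠ ⊥)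
    (hq : q ≠ ⊤) (hq' : q ≠ ⊥) :
    min (if p = ⊤ then ⊤ else φ p.toReal) (φ q.toReal) = φ (min p q).toReal := by
  rcases le_total p q with hpq | hqp
  · have hp' : p ≠ ⊤ := ne_top_of_le_ne_top hq hpq
    rw [if_neg hp', min_eq_left hpq, min_eq_left (hφ (EReal.toReal_le_toReal hpq hp hq))]
  · rw [min_eq_right hqp, min_eq_right]
    split_ifs with hp'
    · exact le_top
    · exact hφ (EReal.toReal_le_toReal hqp hq' hp')

theorem stmt4_general {X : Type*} [MetricSpace X] (ψ : X → EReal) (φ : ℝ → EReal) (x : X)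
    (hψbot : ∀ u, ψ u ≠ ⊥)
    (hφbot : ∀ t, φ t ≠ ⊥) (hφx : φ ((ψ x).toReal) ≠ ⊤)
    (hφmono : Monotone φ)
    (c : ℝ)
    (hderiv : HasDerivAt (fun t => (φ t).toReal) c ((ψ x).toReal))
    (hcond : 0 < c ∨ slopeE ψ x ≠ ⊤) :
    slopeE (fun u => if ψ u = ⊤ then (⊤ : EReal) else φ ((ψ u).toReal)) x =
      ENNReal.ofReal c * slopeE ψ x := by
  by_cases hψx : ψ x = ⊤
  · have hslope : slopeE ψ x = ⊤ := if_pos hψx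
    have hc : 0 < c := hcond.resolve_right (not_not.2 hslope)
    rw [hslope, ENNReal.mul_top (ENNReal.ofReal_pos.2 hc).ne', slopeE, if_pos (if_pos hψx)]
  have hcomp (u : X) : min (if ψ u = ⊤ then ⊤ else φ (ψ u).toReal)
      (if ψ x = ⊤ then ⊤ else φ (ψ x).toReal) = φ (min (ψ u) (ψ x)).toReal := by
    rw [if_neg hψx]
    exact hφmono.min_ite_top_eq (hψbot u) hψx (hψbot x)
  rw [slopeE_eq_limsup_min hψbot hψx] at hcond ⊢
  rw [slopeE_eq_limsup_min (fun u => by split_ifs <;> simp [hφbot]) (by rwa [if_neg hψx])]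
  simp only [hcomp]
  rw [if_neg hψx]
  exact limsup_ofReal_sub_comp_div_eq (h := fun s => (φ s).toReal)
    (t := fun u => (min (ψ u) (ψ x)).toReal) (tendsto_dist_nhdsNE x)
    (fun u => EReal.toReal_le_toReal (min_le_right _ _) (by simp [hψbot]) hψx)
    (hφmono.monotoneOn_toReal_Iic hφbot hφx) hderiv.hasDerivWithinAt hcond

/-- slope chain rule: if `φ : ℝ → ℝ ∪ {+∞}` is nondecreasing and
differentiable at `ψ x` (a point of its domain, with derivative `c`), and either
`c > 0` or `|∇ψ|(x) < +∞`, then `|∇(φ∘ψ)|(x) = φ'(ψ x) · |∇ψ|(x)`. Here the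
composition is understood with `(φ∘ψ)(u) = +∞` whenever `ψ u = +∞`. -/
theorem stmt4 {X : Type*} [MetricSpace X] (ψ : X → EReal) (φ : ℝ → EReal) (x : X)
    (hψbot : ∀ u, ψ u ≠ ⊥) (hψx : ψ x ≠ ⊤)
    (hφbot : ∀ t, φ t ≠ ⊥) (hφx : φ ((ψ x).toReal) ≠ ⊤)
    (hφmono : Monotone φ)
    (c : ℝ)
    (hφfin : ∀ᶠ t in 𝓝 ((ψ x).toReal), φ t ≠ ⊤)
    (hderiv : HasDerivAt (fun t => (φ t).toReal) c ((ψ x).toReal))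
    (hcond : 0 < c ∨ slopeE ψ x ≠ ⊤) :
    slopeE (fun u => if ψ u = ⊤ then (⊤ : EReal) else φ ((ψ u).toReal)) x =
      ENNReal.ofReal c * slopeE ψ x :=
  stmt4_general ψ φ x hψbot hφbot hφx hφmono c hderiv hcond
end

section
/- Let X be a normed vector space, n ≥ 2, a₁,…,a_{n−1} ∈ X, and let f: Xⁿ → ℝ₊ be defined by f(u₁,…,uₙ) := max_{1≤i≤n−1}‖uᵢ−aᵢ−uₙ‖. Let x₁,…,xₙ ∈ X with max_{1≤i≤n−1}‖xᵢ−aᵢ−xₙ‖ > 0. Then the convex subdifferential of f at (x₁,…,xₙ) equals the set of all (x₁*,…,xₙ*) ∈ (X*)ⁿ such that Σ_{i=1}^n xᵢ* = 0, Σ_{i=1}^{n−1}‖xᵢ*‖ = 1, and Σ_{i=1}^{n−1}⟨xᵢ*, xᵢ−aᵢ−xₙ⟩ = max_{1≤i≤n−1}‖xᵢ−aᵢ−xₙ‖. -/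
/-!
Write `v := (xᵢ - aᵢ - xₙ)ᵢ`, so that `f(u) = ‖Du - a‖` for the difference map
`(Du)ᵢ = uᵢ - uₙ` into `Xⁿ⁻¹` with the sup norm. Since `f` is invariant under adding the same
vector to every coordinate, a subgradient `g` satisfies `∑ gᵢ = 0`; on such `g` the pairing
`∑ gᵢ(uᵢ - xᵢ)` only depends on `Du - Dx`, and `D` is onto, so `g` is a subgradient of `f` at `x`
iff `(g₁,…,gₙ₋₁)` is a subgradient of the sup norm at `v`. Those are the functionals of dual
norm at most one attaining `‖v‖` at `v`, and the dual norm of the sup norm is the `ℓ¹` norm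
`∑ ‖gᵢ‖`; since `v ≠ 0` the dual norm is then exactly one.
-/

theorem Pi.norm_eq_ciSup_norm {ι E : Type*} [Fintype ι] [SeminormedAddCommGroup E] (w : ι → E) :
    ‖w‖ = ⨆ i, ‖w i‖ := by
  cases isEmpty_or_nonempty ι
  · simp [Subsingleton.elim w 0]
  · exact (IsGreatest.pi_norm w).csSup_eq.symm

section Subgradient

variable {E : Type*} [SeminormedAddCommGroup E] [NormedSpace ℝ E]

theorem forall_apply_sub_le_norm_sub_norm_iff (L : E →L[ℝ] ℝ) (v : E) :
    (∀ w, L (w - v) ≤ ‖w‖ - ‖v‖) ↔ (∀ w, L w ≤ ‖w‖) ∧ L v = ‖v‖ := by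
  constructor
  · intro h
    refine ⟨fun w => ?_, le_antisymm ?_ ?_⟩
    · have := h (w + v)
      rw [add_sub_cancel_right] at this
      linarith [norm_add_le w v]
    · have := h (2 • v)
      rw [two_nsmul, add_sub_cancel_right] at this
      linarith [norm_add_le v v]
    · have := h 0
      rw [zero_sub, map_neg, norm_zero] at this
      linarith
  · rintro ⟨hL, hv⟩ w
    rw [map_sub, hv]
    linarith [hL w]

variable {ι : Type*} [Fintype ι]

theorem sum_apply_le_sum_norm_mul_norm (g : ι → E →L[ℝ] ℝ) (w : ι → E) :
    ∑ i, g i (w i) ≤ (∑ i, ‖g i‖) * ‖w‖ := by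
  rw [Finset.sum_mul]
  gcongr with i
  calc g i (w i) ≤ ‖g i‖ * ‖w i‖ := (le_abs_self _).trans ((g i).le_opNorm (w i))
    _ ≤ ‖g i‖ * ‖w‖ := by gcongr; exact norm_le_pi_norm w i

theorem sum_eq_zero_of_forall_sum_apply_nonpos (g : ι → E →L[ℝ] ℝ)
    (h : ∀ c, ∑ i, g i c ≤ 0) : ∑ i, g i = 0 := by
  ext c
  have := h (-c)
  simp only [map_neg, Finset.sum_neg_distrib, neg_nonpos] at this
  simpa using le_antisymm (h c) this

theorem Fin.sum_apply_eq_sum_castSucc_apply_sub_last {m : ℕ} {g : Fin (m + 1) → E →L[ℝ] ℝ}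
    (hg : ∑ i, g i = 0) (y : Fin (m + 1) → E) :
    ∑ i, g i (y i) = ∑ i : Fin m, g i.castSucc (y i.castSucc - y (Fin.last m)) := by
  have hlast : g (Fin.last m) (y (Fin.last m)) = -∑ i : Fin m, g i.castSucc (y (Fin.last m)) := by
    have := congrArg (fun L : E →L[ℝ] ℝ => L (y (Fin.last m))) hg
    simp only [Fin.sum_univ_castSucc, add_apply, sum_apply, zero_apply] at this
    linarith
  rw [Fin.sum_univ_castSucc, hlast, ← sub_eq_add_neg, ← Finset.sum_sub_distrib]
  simp only [map_sub]

end Subgradient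

section DualNorm

variable {E : Type*} [NormedAddCommGroup E] [NormedSpace ℝ E]

theorem ContinuousLinearMap.exists_norm_lt_one_lt_apply (f : E →L[ℝ] ℝ) {r : ℝ} (hr : r < ‖f‖) :
    ∃ h : E, ‖h‖ < 1 ∧ r < f h := by
  obtain ⟨h, hh, hr⟩ := f.exists_lt_apply_of_lt_opNorm hr
  rcases le_or_gt 0 (f h) with hf | hf
  · exact ⟨h, hh, by rwa [Real.norm_of_nonneg hf] at hr⟩
  · refine ⟨-h, by rwa [norm_neg], ?_⟩
    rwa [Real.norm_of_nonpos hf.le, ← map_neg] at hr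

variable {ι : Type*} [Fintype ι]

/-- The dual norm of the sup norm on `E^ι` is the `ℓ¹` norm. -/
theorem forall_sum_apply_le_norm_iff (g : ι → E →L[ℝ] ℝ) :
    (∀ w : ι → E, ∑ i, g i (w i) ≤ ‖w‖) ↔ ∑ i, ‖g i‖ ≤ 1 := by
  refine ⟨fun h => le_of_forall_pos_le_add fun ε hε => ?_, fun h w => ?_⟩
  · set δ := ε / (Fintype.card ι + 1)
    have hδ : 0 < δ := by positivity
    choose w hw hgw using fun i => (g i).exists_norm_lt_one_lt_apply (sub_lt_self ‖g i‖ hδ)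
    have hw1 : ‖w‖ ≤ 1 := (pi_norm_le_iff_of_nonneg zero_le_one).2 fun i => (hw i).le
    have hcard : Fintype.card ι * δ ≤ ε := by
      rw [mul_div_assoc', div_le_iff₀ (by positivity)]
      nlinarith
    calc ∑ i, ‖g i‖ = ∑ i, (‖g i‖ - δ) + Fintype.card ι * δ := by simp [Finset.sum_sub_distrib]
      _ ≤ ∑ i, g i (w i) + ε := add_le_add (Finset.sum_le_sum fun i _ => (hgw i).le) hcard
      _ ≤ 1 + ε := by linarith [h w]
  · calc ∑ i, g i (w i) ≤ (∑ i, ‖g i‖) * ‖w‖ := sum_apply_le_sum_norm_mul_norm g w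
      _ ≤ ‖w‖ := mul_le_of_le_one_left (norm_nonneg w) h

theorem forall_sum_apply_sub_le_norm_sub_norm_iff (g : ι → E →L[ℝ] ℝ) (v : ι → E) :
    (∀ w : ι → E, ∑ i, g i (w i - v i) ≤ ‖w‖ - ‖v‖) ↔
      ∑ i, ‖g i‖ ≤ 1 ∧ ∑ i, g i (v i) = ‖v‖ := by
  have hL := forall_apply_sub_le_norm_sub_norm_iff
    (∑ i, (g i).comp (ContinuousLinearMap.proj i)) v
  simp only [sum_apply, ContinuousLinearMap.comp_apply,
    ContinuousLinearMap.proj_apply, Pi.sub_apply] at hL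
  rw [hL, forall_sum_apply_le_norm_iff]

end DualNorm

theorem stmt5_general {X : Type*} [NormedAddCommGroup X] [NormedSpace ℝ X] {m : ℕ}
    (a : Fin m → X) (x : Fin (m + 1) → X)
    (hx : 0 < ⨆ i : Fin m, ‖x i.castSucc - a i - x (Fin.last m)‖) :
    {g : Fin (m + 1) → (X →L[ℝ] ℝ) |
        ∀ u : Fin (m + 1) → X,
          (⨆ i : Fin m, ‖u i.castSucc - a i - u (Fin.last m)‖) -
              (⨆ i : Fin m, ‖x i.castSucc - a i - x (Fin.last m)‖) -
              (∑ i, g i (u i - x i)) ≥ 0} =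
    {g : Fin (m + 1) → (X →L[ℝ] ℝ) |
        (∑ i, g i) = 0 ∧ (∑ i : Fin m, ‖g i.castSucc‖) = 1 ∧
        (∑ i : Fin m, g i.castSucc (x i.castSucc - a i - x (Fin.last m))) =
          ⨆ i : Fin m, ‖x i.castSucc - a i - x (Fin.last m)‖} := by
  simp only [← Pi.norm_eq_ciSup_norm] at hx ⊢
  have hpair : ∀ g : Fin (m + 1) → X →L[ℝ] ℝ, ∑ i, g i = 0 → ∀ u : Fin (m + 1) → X,
      ∑ i, g i (u i - x i) = ∑ i : Fin m, g i.castSucc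
        ((u i.castSucc - a i - u (Fin.last m)) - (x i.castSucc - a i - x (Fin.last m))) := by
    intro g hg u
    rw [Fin.sum_apply_eq_sum_castSucc_apply_sub_last hg]
    congr! 2 with i
    abel
  set v : Fin m → X := fun i => x i.castSucc - a i - x (Fin.last m)
  ext g
  simp only [Set.mem_ofPred_eq, ge_iff_le, sub_nonneg]
  constructor
  · intro hg
    have hsum : ∑ i, g i = 0 := sum_eq_zero_of_forall_sum_apply_nonpos g fun c => by
      have hshift : (fun i => (x i.castSucc + c) - a i - (x (Fin.last m) + c)) = v := by
        funext i
        show _ = x i.castSucc - a i - x (Fin.last m)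
        abel
      simpa only [add_sub_cancel_left, hshift, sub_self] using hg fun i => x i + c
    have hsub : ∀ w : Fin m → X, ∑ i, g i.castSucc (w i - v i) ≤ ‖w‖ - ‖v‖ := fun w => by
      simpa only [hpair g hsum, Fin.snoc_castSucc, Fin.snoc_last, Pi.add_apply, sub_zero,
        add_sub_cancel_right] using hg (Fin.snoc (w + a) 0)
    obtain ⟨hnorm, hval⟩ := (forall_sum_apply_sub_le_norm_sub_norm_iff _ v).1 hsub
    refine ⟨hsum, le_antisymm hnorm ?_, hval⟩
    have := sum_apply_le_sum_norm_mul_norm (fun i : Fin m => g i.castSucc) v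
    rw [hval] at this
    exact le_of_mul_le_mul_right (by simpa using this) hx
  · rintro ⟨hsum, hnorm, hval⟩ u
    rw [hpair g hsum]
    exact (forall_sum_apply_sub_le_norm_sub_norm_iff _ v).2 ⟨hnorm.le, hval⟩ _

/-- representation of the convex subdifferential of
`f(u₁,…,uₙ) = max_{1≤i≤n−1} ‖uᵢ − aᵢ − uₙ‖` on `Xⁿ` (with the maximum norm) at a
point where `f > 0`.  The dual of `Xⁿ` is identified with `(X*)ⁿ` via
`⟨(x₁*,…,xₙ*),(u₁,…,uₙ)⟩ = Σᵢ ⟨xᵢ*, uᵢ⟩`. -/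
theorem stmt5 {X : Type*} [NormedAddCommGroup X] [NormedSpace ℝ X] {m : ℕ} (hm : 1 ≤ m)
    (a : Fin m → X) (x : Fin (m + 1) → X)
    (hx : 0 < ⨆ i : Fin m, ‖x i.castSucc - a i - x (Fin.last m)‖) :
    {g : Fin (m + 1) → (X →L[ℝ] ℝ) |
        ∀ u : Fin (m + 1) → X,
          (⨆ i : Fin m, ‖u i.castSucc - a i - u (Fin.last m)‖) -
              (⨆ i : Fin m, ‖x i.castSucc - a i - x (Fin.last m)‖) -
              (∑ i, g i (u i - x i)) ≥ 0} =
    {g : Fin (m + 1) → (X →L[ℝ] ℝ) |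
        (∑ i, g i) = 0 ∧ (∑ i : Fin m, ‖g i.castSucc‖) = 1 ∧
        (∑ i : Fin m, g i.castSucc (x i.castSucc - a i - x (Fin.last m))) =
          ⨆ i : Fin m, ‖x i.castSucc - a i - x (Fin.last m)‖} :=
  stmt5_general a x hx
end

section
/- Let Ω₁,…,Ωₙ (n≥2) be closed subsets of a Banach space X, x̄ ∈ ∩_{i=1}^n Ωᵢ, a₁,…,a_{n−1} ∈ X, ε > 0 and φ ∈ 𝒞. Suppose ∩_{i=1}^{n−1}(Ωᵢ−aᵢ) ∩ Ωₙ = ∅ and φ(max_{1≤i≤n−1}‖aᵢ‖) < φ(d(Ω₁−a₁,…,Ω_{n−1}−a_{n−1},Ωₙ)) + ε. Then for any λ>0 and η>0 there exist points ωᵢ ∈ Ωᵢ ∩ B_λ(x̄) (i=1,…,n−1) and ωₙ ∈ Ωₙ ∩ B_η(x̄) such that: (a) 0 < max_{1≤i≤n−1}‖ωₙ+aᵢ−ωᵢ‖ ≤ max_{1≤i≤n−1}‖aᵢ‖; and (b) sup over all uᵢ ∈ Ωᵢ (i=1,…,n) with (u₁,…,uₙ) ≠ (ω₁,…,ωₙ)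 of [φ(max_{1≤i≤n−1}‖ωₙ+aᵢ−ωᵢ‖) − φ(max_{1≤i≤n−1}‖uₙ+aᵢ−uᵢ‖)] / ‖(u₁−ω₁,…,uₙ−ωₙ)‖_{λ,η} is strictly less than ε. -/
/-!
Ekeland's variational principle, applied on the closed set `Ω₁ × ⋯ × Ωₙ` with respect to the
parametric norm to `p ↦ φ (maxᵢ ‖pₙ + aᵢ - pᵢ‖)`, bounded below by `φ(d)`, starting from the
diagonal point `(x̄, …, x̄)` where its value is `φ (maxᵢ ‖aᵢ‖)`. Choosing the slope `c` strictly
between the excess `φ (maxᵢ ‖aᵢ‖) - φ(d)` and `ε`, the Ekeland point lies at parametric distance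
less than `1` from the diagonal, i.e. in the balls; the non-intersection hypothesis makes its gap
positive, and Ekeland's inequality is the slope bound.
-/

open Filter

/-- The nonintersect index `d(Ω₁,…,Ω_m,Ωₙ) = inf{ max_i ‖uₙ − uᵢ‖ : uᵢ ∈ Ωᵢ, uₙ ∈ Ωₙ }`. -/
noncomputable def nonintersectIndex {X : Type*} [NormedAddCommGroup X] {m : ℕ}
    (Ω : Fin m → Set X) (Ωn : Set X) : ℝ :=
  sInf {r : ℝ | ∃ (u : Fin m → X) (un : X),
    (∀ i, u i ∈ Ω i) ∧ un ∈ Ωn ∧ r = ⨆ i, ‖un - u i‖}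

open Set

section Ekeland

variable {E : Type*} [MetricSpace E] {f : E → ℝ} {c : ℝ}

def ekelandSet (f : E → ℝ) (c : ℝ) (y : E) : Set E := {u | f u + c * dist u y ≤ f y}

theorem self_mem_ekelandSet (y : E) : y ∈ ekelandSet f c y := by
  simp [ekelandSet]

theorem ekelandSet_subset (hc : 0 ≤ c) {y z : E} (h : y ∈ ekelandSet f c z) :
    ekelandSet f c y ⊆ ekelandSet f c z := fun u hu => by
  simp only [ekelandSet, mem_ofPred_eq] at *
  linarith [mul_le_mul_of_nonneg_left (dist_triangle u y z) hc]

theorem isClosed_ekelandSet (hf : LowerSemicontinuous f) (y : E) :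
    IsClosed (ekelandSet f c y) :=
  (hf.add (continuous_const.mul (continuous_id.dist continuous_const)).lowerSemicontinuous)
    |>.isClosed_preimage (f y)

theorem exists_mem_ekelandSet_forall_le_add (hbdd : BddBelow (range f)) (y : E) {δ : ℝ}
    (hδ : 0 < δ) : ∃ z ∈ ekelandSet f c y, ∀ u ∈ ekelandSet f c y, f z ≤ f u + δ := by
  obtain ⟨_, ⟨z, hz, rfl⟩, hlt⟩ := exists_lt_of_csInf_lt
    (⟨f y, y, self_mem_ekelandSet y, rfl⟩ : (f '' ekelandSet f c y).Nonempty)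
    (lt_add_of_pos_right _ hδ)
  have hinf : ∀ u ∈ ekelandSet f c y, sInf (f '' ekelandSet f c y) ≤ f u := fun u hu =>
    csInf_le (hbdd.mono (image_subset_range _ _)) ⟨u, hu, rfl⟩
  exact ⟨z, hz, fun u hu => by linarith [hinf u hu]⟩

theorem mul_dist_le_of_mem_ekelandSet (hc : 0 ≤ c) {y z : E} {δ : ℝ}
    (hy : y ∈ ekelandSet f c z) (hmin : ∀ u ∈ ekelandSet f c z, f y ≤ f u + δ) :
    ∀ u ∈ ekelandSet f c y, c * dist u y ≤ δ := fun u hu => by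
  have := hmin u (ekelandSet_subset hc hy hu)
  simp only [ekelandSet, mem_ofPred_eq] at hu
  linarith

/-- Ekeland's variational principle. -/
theorem LowerSemicontinuous.exists_forall_lt_add_dist [CompleteSpace E]
    (hf : LowerSemicontinuous f) (hbdd : BddBelow (range f)) (hc : 0 < c) (x₀ : E) :
    ∃ ω, f ω + c * dist ω x₀ ≤ f x₀ ∧ ∀ u, u ≠ ω → f ω < f u + c * dist u ω := by
  -- `x (k + 1)` is a `2⁻ᵏ`-minimizer of `f` on `ekelandSet f c (x k)`; these closed sets are
  -- nested and shrink to the point `ω`.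
  choose next hnext_mem hnext_le using fun (k : ℕ) y =>
    exists_mem_ekelandSet_forall_le_add (c := c) hbdd y (pow_pos (one_half_pos (α := ℝ)) k)
  let x : ℕ → E := fun k => Nat.rec x₀ next k
  have hanti : Antitone fun k => ekelandSet f c (x k) :=
    antitone_nat_of_succ_le fun k => ekelandSet_subset hc.le (hnext_mem k (x k))
  have hmem : ∀ k n, k ≤ n → x n ∈ ekelandSet f c (x k) :=
    fun k n hkn => hanti hkn (self_mem_ekelandSet _)
  have hsmall : ∀ k, ∀ u ∈ ekelandSet f c (x (k + 1)), c * dist u (x (k + 1)) ≤ (1 / 2) ^ k :=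
    fun k => mul_dist_le_of_mem_ekelandSet hc.le (hnext_mem k (x k)) (hnext_le k (x k))
  have hcauchy : CauchySeq x := by
    rw [Metric.cauchySeq_iff']
    intro ε hε
    obtain ⟨k, hk⟩ := exists_pow_lt_of_lt_one (mul_pos hc hε) one_half_lt_one
    exact ⟨k + 1, fun n hn =>
      lt_of_mul_lt_mul_left ((hsmall k _ (hmem _ n hn)).trans_lt hk) hc.le⟩
  obtain ⟨ω, hω⟩ := cauchySeq_tendsto_of_complete hcauchy
  have hωmem : ∀ k, ω ∈ ekelandSet f c (x k) := fun k =>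
    (isClosed_ekelandSet hf _).mem_of_tendsto hω (eventually_atTop.2 ⟨k, hmem k⟩)
  refine ⟨ω, hωmem 0, fun u hne => ?_⟩
  by_contra! hu
  have huk : ∀ k, u ∈ ekelandSet f c (x k) := fun k => ekelandSet_subset hc.le (hωmem k) hu
  have hle : ∀ k : ℕ, c * dist u ω ≤ 2 * (1 / 2) ^ k := fun k => by
    linarith [hsmall k u (huk (k + 1)), hsmall k ω (hωmem (k + 1)),
      mul_le_mul_of_nonneg_left (dist_triangle_right u ω (x (k + 1))) hc.le]
  have hzero : c * dist u ω ≤ 0 := by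
    simpa using ge_of_tendsto' ((tendsto_pow_atTop_nhds_zero_of_lt_one (by norm_num)
      one_half_lt_one).const_mul 2) hle
  exact hne (dist_le_zero.mp (nonpos_of_mul_nonpos_right hzero hc))

theorem IsClosed.exists_forall_lt_add_dist [CompleteSpace E] {S : Set E} (hS : IsClosed S)
    (hf : LowerSemicontinuousOn f S) (hbdd : BddBelow (f '' S)) (hc : 0 < c) {x₀ : E}
    (hx₀ : x₀ ∈ S) :
    ∃ ω ∈ S, f ω + c * dist ω x₀ ≤ f x₀ ∧ ∀ u ∈ S, u ≠ ω → f ω < f u + c * dist u ω := by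
  have := hS.completeSpace_coe
  obtain ⟨ω, hω₀, hω⟩ := (lowerSemicontinuous_restrict_iff.mpr hf).exists_forall_lt_add_dist
    (hbdd.mono (by rintro _ ⟨x, rfl⟩; exact ⟨x, x.2, rfl⟩)) hc ⟨x₀, hx₀⟩
  exact ⟨ω, ω.2, hω₀, fun u hu hne => hω ⟨u, hu⟩ (Subtype.coe_ne_coe.mp hne)⟩

end Ekeland

theorem pi_norm_eq_iSup {ι E : Type*} [Fintype ι] [SeminormedAddCommGroup E] (f : ι → E) :
    ‖f‖ = ⨆ i, ‖f i‖ :=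
  (PiLp.norm_toLp f).symm.trans (PiLp.norm_eq_ciSup _)

section ParamNorm

variable {ι X : Type*} [NormedAddCommGroup X] {lam eta : ℝ}

noncomputable def paramNorm (lam eta : ℝ) (p : (ι → X) × X) : ℝ :=
  max (⨆ i, lam⁻¹ * ‖p.1 i‖) (eta⁻¹ * ‖p.2‖)

theorem paramNorm_nonneg (lam : ℝ) (heta : 0 ≤ eta) (p : (ι → X) × X) :
    0 ≤ paramNorm lam eta p :=
  (mul_nonneg (inv_nonneg.mpr heta) (norm_nonneg _)).trans (le_max_right _ _)

theorem paramNorm_eq_norm_smul [Fintype ι] [NormedSpace ℝ X] (hlam : 0 ≤ lam) (heta : 0 ≤ eta)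
    (p : (ι → X) × X) : paramNorm lam eta p = ‖(lam⁻¹ • p.1, eta⁻¹ • p.2)‖ := by
  simp [paramNorm, Prod.norm_def, pi_norm_eq_iSup, norm_smul, abs_of_nonneg, hlam, heta,
    Real.mul_iSup_of_nonneg]

theorem norm_lt_of_paramNorm_lt_one [Finite ι] (hlam : 0 < lam) (heta : 0 < eta)
    {p : (ι → X) × X} (hp : paramNorm lam eta p < 1) : (∀ i, ‖p.1 i‖ < lam) ∧ ‖p.2‖ < eta := by
  obtain ⟨h₁, h₂⟩ := max_lt_iff.mp hp
  refine ⟨fun i => ?_, by rwa [inv_mul_lt_iff₀ heta, mul_one] at h₂⟩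
  have := (le_ciSup (Finite.bddAbove_range fun i => lam⁻¹ * ‖p.1 i‖) i).trans_lt h₁
  rwa [inv_mul_lt_iff₀ hlam, mul_one] at this

theorem IsClosed.exists_forall_lt_add_paramNorm [Fintype ι] [NormedSpace ℝ X] [CompleteSpace X]
    {S : Set ((ι → X) × X)} (hS : IsClosed S) {f : (ι → X) × X → ℝ}
    (hf : LowerSemicontinuousOn f S) (hbdd : BddBelow (f '' S)) {c : ℝ} (hc : 0 < c)
    (hlam : 0 < lam) (heta : 0 < eta) {x₀ : (ι → X) × X} (hx₀ : x₀ ∈ S) :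
    ∃ ω ∈ S, f ω + c * paramNorm lam eta (ω - x₀) ≤ f x₀ ∧
      ∀ u ∈ S, u ≠ ω → f ω < f u + c * paramNorm lam eta (u - ω) := by
  let scale : (ι → X) × X → (ι → X) × X := fun v => (lam • v.1, eta • v.2)
  let unscale : (ι → X) × X → (ι → X) × X := fun p => (lam⁻¹ • p.1, eta⁻¹ • p.2)
  have hscale : ∀ p, scale (unscale p) = p := fun p => by
    simp [scale, unscale, smul_inv_smul₀ hlam.ne', smul_inv_smul₀ heta.ne']
  have hunscale : ∀ v, unscale (scale v) = v := fun v => by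
    simp [scale, unscale, inv_smul_smul₀ hlam.ne', inv_smul_smul₀ heta.ne']
  have hdist : ∀ p q, dist (unscale p) (unscale q) = paramNorm lam eta (p - q) := fun p q => by
    simp [paramNorm_eq_norm_smul hlam.le heta.le, dist_eq_norm, unscale, smul_sub]
  have hcont : Continuous scale := by fun_prop
  obtain ⟨ω, hωS, hω₀, hω⟩ := (hS.preimage hcont).exists_forall_lt_add_dist (f := f ∘ scale)
    (hf.comp hcont.continuousOn fun _ h => h)
    (hbdd.mono (image_comp f scale _ ▸ image_mono (image_preimage_subset _ _))) hc
    (x₀ := unscale x₀) (by simpa [hscale] using hx₀)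
  refine ⟨scale ω, hωS, ?_, fun u hu hne => ?_⟩
  · rw [← hdist, hunscale]
    simpa only [Function.comp_apply, hscale] using hω₀
  · have := hω (unscale u) (by simpa [hscale] using hu) (fun h => hne (h ▸ (hscale u).symm))
    rw [← hdist, hunscale]
    simpa only [Function.comp_apply, hscale] using this

end ParamNorm

section ShiftedGap

variable {ι X : Type*} [NormedAddCommGroup X] (a : ι → X)

noncomputable def shiftedGap (p : (ι → X) × X) : ℝ := ⨆ i, ‖p.2 + a i - p.1 i‖

theorem shiftedGap_nonneg (p : (ι → X) × X) : 0 ≤ shiftedGap a p :=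
  Real.iSup_nonneg fun _ => norm_nonneg _

theorem continuous_shiftedGap [Fintype ι] : Continuous (shiftedGap a) := by
  rw [show shiftedGap a = fun p => ‖fun i => p.2 + a i - p.1 i‖ from
    funext fun p => (pi_norm_eq_iSup _).symm]
  fun_prop

theorem shiftedGap_diag (x : X) : shiftedGap a (fun _ => x, x) = ⨆ i, ‖a i‖ := by
  simp [shiftedGap]

end ShiftedGap

section Nonintersect

variable {X : Type*} [NormedAddCommGroup X] {m : ℕ} {Ω : Fin m → Set X} {Ωn : Set X}
  {a : Fin m → X}

theorem nonintersectIndex_nonneg : 0 ≤ nonintersectIndex Ω Ωn :=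
  Real.sInf_nonneg <| by
    rintro _ ⟨u, un, -, -, rfl⟩
    exact Real.iSup_nonneg fun _ => norm_nonneg _

theorem nonintersectIndex_translate_le_shiftedGap {p : (Fin m → X) × X}
    (hp : p ∈ univ.pi Ω ×ˢ Ωn) :
    nonintersectIndex (fun i => (fun z => z - a i) '' Ω i) Ωn ≤ shiftedGap a p := by
  refine csInf_le ⟨0, ?_⟩
    ⟨fun i => p.1 i - a i, p.2, fun i => ⟨p.1 i, hp.1 i (mem_univ i), rfl⟩, hp.2, ?_⟩
  · rintro _ ⟨u, un, -, -, rfl⟩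
    exact Real.iSup_nonneg fun _ => norm_nonneg _
  · simp only [shiftedGap, sub_sub_eq_add_sub]

theorem shiftedGap_pos (hne : (⋂ i, (fun z => z - a i) '' Ω i) ∩ Ωn = ∅)
    {p : (Fin m → X) × X} (hp : p ∈ univ.pi Ω ×ˢ Ωn) : 0 < shiftedGap a p := by
  refine (shiftedGap_nonneg a p).lt_of_ne fun h => hne.subset ⟨mem_iInter.mpr fun i => ?_, hp.2⟩
  have : ‖p.2 + a i - p.1 i‖ ≤ 0 := (le_ciSup (Finite.bddAbove_range _) i).trans h.symm.le
  have hi : p.2 + a i = p.1 i := sub_eq_zero.mp (norm_le_zero_iff.mp this)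
  exact ⟨p.1 i, hp.1 i (mem_univ i), by simp [← hi]⟩

end Nonintersect

theorem stmt6_general {X : Type*} [NormedAddCommGroup X] [NormedSpace ℝ X] [CompleteSpace X]
    {m : ℕ} (Ω : Fin m → Set X) (Ωn : Set X)
    (hΩ : ∀ i, IsClosed (Ω i)) (hΩn : IsClosed Ωn)
    (xbar : X) (hxbar : ∀ i, xbar ∈ Ω i) (hxbarn : xbar ∈ Ωn)
    (a : Fin m → X) (ε : ℝ) (hε : 0 < ε)
    (φ : ℝ → ℝ) (hφmono : StrictMonoOn φ (Set.Ici 0))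
    (hφcont : ContinuousOn φ (Set.Ici 0))
    (hne : (⋂ i, (fun z => z - a i) '' Ω i) ∩ Ωn = ∅)
    (hd : φ (⨆ i, ‖a i‖) <
      φ (nonintersectIndex (fun i => (fun z => z - a i) '' Ω i) Ωn) + ε) :
    ∀ lam > (0 : ℝ), ∀ eta > (0 : ℝ),
      ∃ (ω : Fin m → X) (ωn : X),
        (∀ i, ω i ∈ Ω i ∩ Metric.ball xbar lam) ∧ ωn ∈ Ωn ∩ Metric.ball xbar eta ∧
        0 < (⨆ i, ‖ωn + a i - ω i‖) ∧ (⨆ i, ‖ωn + a i - ω i‖) ≤ (⨆ i, ‖a i‖) ∧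
        ∃ c < ε, ∀ (u : Fin m → X) (un : X), (∀ i, u i ∈ Ω i) → un ∈ Ωn →
          ¬(u = ω ∧ un = ωn) →
          φ (⨆ i, ‖ωn + a i - ω i‖) - φ (⨆ i, ‖un + a i - u i‖) ≤
            c * max (⨆ i, lam⁻¹ * ‖u i - ω i‖) (eta⁻¹ * ‖un - ωn‖) := by
  intro lam hlam eta heta
  set d := nonintersectIndex (fun i => (fun z => z - a i) '' Ω i) Ωn
  have hS : IsClosed (univ.pi Ω ×ˢ Ωn) := (isClosed_set_pi fun i _ => hΩ i).prod hΩn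
  have hφd : ∀ p ∈ univ.pi Ω ×ˢ Ωn, φ d ≤ φ (shiftedGap a p) := fun p hp =>
    hφmono.monotoneOn nonintersectIndex_nonneg (shiftedGap_nonneg a p)
      (nonintersectIndex_translate_le_shiftedGap hp)
  obtain ⟨c, hexcess, hcε⟩ :=
    exists_between (max_lt (sub_lt_iff_lt_add'.mpr hd) hε : max (φ (⨆ i, ‖a i‖) - φ d) 0 < ε)
  obtain ⟨hexcess, hc⟩ := max_lt_iff.mp hexcess
  have hf : LowerSemicontinuous (φ ∘ shiftedGap a) :=
    (hφcont.comp_continuous (continuous_shiftedGap a) (shiftedGap_nonneg a)).lowerSemicontinuous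
  obtain ⟨ω, hωS, hω₀, hωmin⟩ := hS.exists_forall_lt_add_paramNorm (hf.lowerSemicontinuousOn _)
    ⟨_, forall_mem_image.mpr hφd⟩ hc hlam heta (x₀ := (fun _ => xbar, xbar))
    ⟨fun i _ => hxbar i, hxbarn⟩
  simp only [Function.comp_apply, shiftedGap_diag] at hω₀ hωmin
  have hnear : paramNorm lam eta (ω - (fun _ => xbar, xbar)) < 1 :=
    lt_of_mul_lt_mul_left (by linarith [hφd ω hωS]) hc.le
  obtain ⟨hball, hballn⟩ := norm_lt_of_paramNorm_lt_one hlam heta hnear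
  refine ⟨ω.1, ω.2, fun i => ⟨hωS.1 i (mem_univ i), mem_ball_iff_norm.mpr (hball i)⟩,
    ⟨hωS.2, mem_ball_iff_norm.mpr hballn⟩, shiftedGap_pos hne hωS, ?_, c, hcε,
    fun u un hu hun hne' => ?_⟩
  · exact (hφmono.le_iff_le (shiftedGap_nonneg a ω) (Real.iSup_nonneg fun _ => norm_nonneg _)).mp
      ((le_add_of_nonneg_right (mul_nonneg hc.le (paramNorm_nonneg lam heta.le _))).trans hω₀)
  · have := hωmin (u, un) ⟨fun i _ => hu i, hun⟩
      fun h => hne' ⟨congrArg Prod.fst h, congrArg Prod.snd h⟩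
    simp only [shiftedGap, paramNorm, Prod.fst_sub, Prod.snd_sub, Pi.sub_apply] at this
    linarith

/-- slope necessary conditions (global sup form) for the non-intersection
property `⋂ᵢ(Ωᵢ−aᵢ) ∩ Ωₙ = ∅`.  Here "sup … < ε" is expressed as: there is `c < ε`
bounding all the difference quotients (written in multiplied-out form with the
parametric norm `‖·‖_{λ,η}`). -/
theorem stmt6 {X : Type*} [NormedAddCommGroup X] [NormedSpace ℝ X] [CompleteSpace X]
    {m : ℕ} (hm : 1 ≤ m) (Ω : Fin m → Set X) (Ωn : Set X)
    (hΩ : ∀ i, IsClosed (Ω i)) (hΩn : IsClosed Ωn)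
    (xbar : X) (hxbar : ∀ i, xbar ∈ Ω i) (hxbarn : xbar ∈ Ωn)
    (a : Fin m → X) (ε : ℝ) (hε : 0 < ε)
    (φ : ℝ → ℝ) (hφmono : StrictMonoOn φ (Set.Ici 0))
    (hφcont : ContinuousOn φ (Set.Ici 0)) (hφ0 : φ 0 = 0)
    (hφtop : Tendsto φ atTop atTop)
    (hne : (⋂ i, (fun z => z - a i) '' Ω i) ∩ Ωn = ∅)
    (hd : φ (⨆ i, ‖a i‖) <
      φ (nonintersectIndex (fun i => (fun z => z - a i) '' Ω i) Ωn) + ε) :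
    ∀ lam > (0 : ℝ), ∀ eta > (0 : ℝ),
      ∃ (ω : Fin m → X) (ωn : X),
        (∀ i, ω i ∈ Ω i ∩ Metric.ball xbar lam) ∧ ωn ∈ Ωn ∩ Metric.ball xbar eta ∧
        0 < (⨆ i, ‖ωn + a i - ω i‖) ∧ (⨆ i, ‖ωn + a i - ω i‖) ≤ (⨆ i, ‖a i‖) ∧
        ∃ c < ε, ∀ (u : Fin m → X) (un : X), (∀ i, u i ∈ Ω i) → un ∈ Ωn →
          ¬(u = ω ∧ un = ωn) →
          φ (⨆ i, ‖ωn + a i - ω i‖) - φ (⨆ i, ‖un + a i - u i‖) ≤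
            c * max (⨆ i, lam⁻¹ * ‖u i - ω i‖) (eta⁻¹ * ‖un - ωn‖) :=
  stmt6_general Ω Ωn hΩ hΩn xbar hxbar hxbarn a ε hε φ hφmono hφcont hne hd
end
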